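/- Let G be a finite connected weighted graph with edge lengths in [ℓ_min, ℓ_max] and r = ℓ_max/ℓ_min. Let S and S' be two sets of k sources such that max_p d(p, S) ≤ 2·max_p d(p, S') (i.e., S is a 2-approximation of S' for the k-center objective). Then the stretch factor of S satisfies max_{p≠q} d(p,S,q)/d(p,q) ≤ 2r·max_{u≠v} d(u,S',v)/d(u,v) + 6r + 1. -/
import Mathlib
open SimpleGraph Finset

noncomputable def walkLen {V : Type*} (G : SimpleGraph V) (ℓ : V → V → ℝ) {p q : V}
    (w : G.Walk p q) : ℝ :=
  (w.darts.map fun d => ℓ d.toProd.1 d.toProd.2).sum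

noncomputable def gdist {V : Type*} (G : SimpleGraph V) (ℓ : V → V → ℝ) (p q : V) : ℝ :=
  sInf {x | ∃ w : G.Walk p q, walkLen G ℓ w = x}

section aux
variable {V : Type*} {G : SimpleGraph V} {ℓ : V → V → ℝ}

lemma walkLen_cons {p b q : V} (h : G.Adj p b) (w : G.Walk b q) :
    walkLen G ℓ (Walk.cons h w) = ℓ p b + walkLen G ℓ w := by
  simp [walkLen]

lemma walkLen_append {p s q : V} (w1 : G.Walk p s) (w2 : G.Walk s q) :
    walkLen G ℓ (w1.append w2) = walkLen G ℓ w1 + walkLen G ℓ w2 := by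
  simp [walkLen, Walk.darts_append]

lemma walkLen_reverse (hsymm : ∀ a b, ℓ a b = ℓ b a) {p q : V} (w : G.Walk p q) :
    walkLen G ℓ w.reverse = walkLen G ℓ w := by
  simp [walkLen, Walk.darts_reverse, List.map_reverse, List.sum_reverse,
    Function.comp, Dart.symm]
  congr 1
  apply List.map_congr_left
  intro d _
  exact (hsymm _ _)

lemma walkLen_nonneg (hpos : ∀ a b, G.Adj a b → 0 ≤ ℓ a b) {p q : V} (w : G.Walk p q) :
    0 ≤ walkLen G ℓ w := by
  apply List.sum_nonneg
  intro x hx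
  obtain ⟨d, _, rfl⟩ := List.mem_map.mp hx
  exact hpos _ _ d.adj

lemma distSet_nonempty (hconn : G.Connected) (p q : V) :
    {x | ∃ w : G.Walk p q, walkLen G ℓ w = x}.Nonempty := by
  obtain ⟨w⟩ := hconn p q
  exact ⟨walkLen G ℓ w, w, rfl⟩

lemma distSet_bddBelow (hpos : ∀ a b, G.Adj a b → 0 ≤ ℓ a b) (p q : V) :
    BddBelow {x | ∃ w : G.Walk p q, walkLen G ℓ w = x} := by
  refine ⟨0, ?_⟩
  rintro x ⟨w, rfl⟩
  exact walkLen_nonneg hpos w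

lemma gdist_nonneg (hpos : ∀ a b, G.Adj a b → 0 ≤ ℓ a b) (p q : V) :
    0 ≤ gdist G ℓ p q :=
  Real.sInf_nonneg (by rintro x ⟨w, rfl⟩; exact walkLen_nonneg hpos w)

lemma gdist_le_walkLen (hpos : ∀ a b, G.Adj a b → 0 ≤ ℓ a b) {p q : V} (w : G.Walk p q) :
    gdist G ℓ p q ≤ walkLen G ℓ w :=
  csInf_le (distSet_bddBelow hpos p q) ⟨w, rfl⟩

lemma gdist_triangle (hconn : G.Connected) (hpos : ∀ a b, G.Adj a b → 0 ≤ ℓ a b)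
    (p s q : V) : gdist G ℓ p q ≤ gdist G ℓ p s + gdist G ℓ s q := by
  rw [← sub_le_iff_le_add']
  show _ ≤ sInf {x | ∃ w : G.Walk s q, walkLen G ℓ w = x}
  apply le_csInf (distSet_nonempty hconn s q)
  rintro y ⟨w2, rfl⟩
  rw [sub_le_iff_le_add', add_comm, ← sub_le_iff_le_add']
  show _ ≤ sInf {x | ∃ w : G.Walk p s, walkLen G ℓ w = x}
  apply le_csInf (distSet_nonempty hconn p s)
  rintro x ⟨w1, rfl⟩
  rw [sub_le_iff_le_add', add_comm, ← walkLen_append]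
  exact gdist_le_walkLen hpos _

lemma gdist_symm (hconn : G.Connected) (hpos : ∀ a b, G.Adj a b → 0 ≤ ℓ a b)
    (hsymm : ∀ a b, ℓ a b = ℓ b a) (p q : V) :
    gdist G ℓ p q = gdist G ℓ q p := by
  have key : ∀ a b : V, gdist G ℓ a b ≤ gdist G ℓ b a := by
    intro a b
    show _ ≤ sInf {x | ∃ w : G.Walk b a, walkLen G ℓ w = x}
    apply le_csInf (distSet_nonempty hconn b a)
    rintro x ⟨w, rfl⟩
    calc gdist G ℓ a b ≤ walkLen G ℓ w.reverse := gdist_le_walkLen hpos _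
      _ = walkLen G ℓ w := walkLen_reverse hsymm w
  exact le_antisymm (key p q) (key q p)

lemma gdist_lower {lmin : ℝ} (hlmin : 0 ≤ lmin)
    (hlow : ∀ a b, G.Adj a b → lmin ≤ ℓ a b) {p q : V} (hne : p ≠ q)
    (hconn : G.Connected) : lmin ≤ gdist G ℓ p q := by
  have hpos : ∀ a b, G.Adj a b → 0 ≤ ℓ a b := fun a b h => hlmin.trans (hlow a b h)
  show _ ≤ sInf {x | ∃ w : G.Walk p q, walkLen G ℓ w = x}
  apply le_csInf (distSet_nonempty hconn p q)
  rintro x ⟨w, rfl⟩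
  cases w with
  | nil => exact absurd rfl hne
  | cons h w' =>
    rw [walkLen_cons]
    calc lmin = lmin + 0 := by ring
      _ ≤ ℓ _ _ + walkLen G ℓ w' := add_le_add (hlow _ _ h) (walkLen_nonneg hpos w')

lemma gdist_adj_le {lmax : ℝ} (hup : ∀ a b, G.Adj a b → ℓ a b ≤ lmax)
    (hpos : ∀ a b, G.Adj a b → 0 ≤ ℓ a b) {p q : V} (h : G.Adj p q) :
    gdist G ℓ p q ≤ lmax := by
  calc gdist G ℓ p q ≤ walkLen G ℓ (Walk.cons h Walk.nil) := gdist_le_walkLen hpos _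
    _ = ℓ p q := by simp [walkLen_cons, walkLen]
    _ ≤ lmax := hup _ _ h

end aux

noncomputable def dvia {V : Type*} (G : SimpleGraph V) (ℓ : V → V → ℝ) (S : Finset V)
    (hS : S.Nonempty) (p q : V) : ℝ :=
  S.inf' hS fun s => gdist G ℓ p s + gdist G ℓ s q

noncomputable def dnear {V : Type*} (G : SimpleGraph V) (ℓ : V → V → ℝ) (S : Finset V)
    (hS : S.Nonempty) (p : V) : ℝ :=
  S.inf' hS fun s => gdist G ℓ p s

noncomputable def stretch {V : Type*} (G : SimpleGraph V) (ℓ : V → V → ℝ) (S : Finset V)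
    (hS : S.Nonempty) : ℝ :=
  sSup {x | ∃ p q : V, p ≠ q ∧ x = dvia G ℓ S hS p q / gdist G ℓ p q}

noncomputable def farthest {V : Type*} (G : SimpleGraph V) (ℓ : V → V → ℝ) (S : Finset V)
    (hS : S.Nonempty) : ℝ :=
  sSup {x | ∃ p : V, x = dnear G ℓ S hS p}

/-- stretch of a 2-approximate k-center solution S versus the stretch of S'. -/
theorem stmt_8 {V : Type*} [Fintype V] [Nontrivial V] (G : SimpleGraph V) (hconn : G.Connected)
    (ℓ : V → V → ℝ) (hsymm : ∀ a b, ℓ a b = ℓ b a)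
    (lmin lmax : ℝ) (hlmin : 0 < lmin)
    (hbounds : ∀ a b, G.Adj a b → lmin ≤ ℓ a b ∧ ℓ a b ≤ lmax)
    (r : ℝ) (hr : r = lmax / lmin) (k : ℕ)
    (S S' : Finset V) (hS : S.Nonempty) (hS' : S'.Nonempty)
    (hcard : S.card = k) (hcard' : S'.card = k)
    (h2approx : farthest G ℓ S hS ≤ 2 * farthest G ℓ S' hS') :
    stretch G ℓ S hS ≤ 2 * r * stretch G ℓ S' hS' + 6 * r + 1 := by
  classical
  have hlow : ∀ a b, G.Adj a b → lmin ≤ ℓ a b := fun a b h => (hbounds a b h).1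
  have hup : ∀ a b, G.Adj a b → ℓ a b ≤ lmax := fun a b h => (hbounds a b h).2
  have hpos : ∀ a b, G.Adj a b → 0 ≤ ℓ a b := fun a b h => hlmin.le.trans (hlow a b h)
  -- every vertex has a neighbor
  have hnbr : ∀ p : V, ∃ v, G.Adj p v := by
    intro p
    obtain ⟨q, hq⟩ := exists_ne p
    obtain ⟨w⟩ := hconn p q
    cases w with
    | nil => exact absurd rfl hq
    | cons h _ => exact ⟨_, h⟩
  -- lmin ≤ lmax, r > 0
  have hle : lmin ≤ lmax := by
    obtain ⟨p⟩ := (inferInstance : Nonempty V)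
    obtain ⟨v, hv⟩ := hnbr p
    exact (hlow p v hv).trans (hup p v hv)
  have hlmax : 0 < lmax := hlmin.trans_le hle
  have hrpos : 0 < r := hr ▸ div_pos hlmax hlmin
  have hlmaxr : lmax = r * lmin := by rw [hr]; field_simp
  -- basic gdist facts
  have hgd0 : ∀ p q : V, 0 ≤ gdist G ℓ p q := gdist_nonneg hpos
  have hgsymm := gdist_symm hconn hpos hsymm (G := G) (ℓ := ℓ)
  have htri := gdist_triangle hconn hpos (G := G) (ℓ := ℓ)
  -- dnear nonneg
  have hdnear0 : ∀ (T : Finset V) (hT : T.Nonempty) (p : V), 0 ≤ dnear G ℓ T hT p := by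
    intro T hT p
    exact Finset.le_inf' hT _ fun s _ => hgd0 p s
  -- stretch set of S' : bounded above
  have hT'fin : {x | ∃ p q : V, p ≠ q ∧ x = dvia G ℓ S' hS' p q / gdist G ℓ p q}.Finite := by
    apply Set.Finite.subset (Set.finite_range
      (fun pq : V × V => dvia G ℓ S' hS' pq.1 pq.2 / gdist G ℓ pq.1 pq.2))
    rintro x ⟨p, q, _, rfl⟩
    exact ⟨(p, q), rfl⟩
  have hT'bdd := hT'fin.bddAbove
  have hmem_le : ∀ p q : V, p ≠ q →
      dvia G ℓ S' hS' p q / gdist G ℓ p q ≤ stretch G ℓ S' hS' := by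
    intro p q hpq
    exact le_csSup hT'bdd ⟨p, q, hpq, rfl⟩
  set st' := stretch G ℓ S' hS' with hst'
  -- stretch' ≥ 0
  have hst'0 : 0 ≤ st' := by
    obtain ⟨p, q, hpq⟩ := exists_pair_ne V
    refine le_trans ?_ (hmem_le p q hpq)
    apply div_nonneg _ (hgd0 p q)
    exact Finset.le_inf' hS' _ fun s _ => add_nonneg (hgd0 p s) (hgd0 s q)
  -- key: 2 * dnear(p, S') ≤ lmax * st' + lmax
  have key : ∀ p : V, 2 * dnear G ℓ S' hS' p ≤ lmax * st' + lmax := by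
    intro p
    obtain ⟨v, hadj⟩ := hnbr p
    have hpv : p ≠ v := hadj.ne
    have h1 : lmin ≤ gdist G ℓ p v := gdist_lower hlmin.le hlow hpv hconn
    have hd0 : 0 < gdist G ℓ p v := hlmin.trans_le h1
    have h2 : gdist G ℓ p v ≤ lmax := gdist_adj_le hup hpos hadj
    have hdvia : 2 * dnear G ℓ S' hS' p - gdist G ℓ p v ≤ dvia G ℓ S' hS' p v := by
      apply Finset.le_inf' hS'
      intro s hsmem
      have ha : dnear G ℓ S' hS' p ≤ gdist G ℓ p s := Finset.inf'_le _ hsmem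
      have hb : gdist G ℓ p s ≤ gdist G ℓ p v + gdist G ℓ v s := htri p v s
      have hc : gdist G ℓ v s = gdist G ℓ s v := hgsymm v s
      linarith
    have hst := hmem_le p v hpv
    rw [div_le_iff₀ hd0] at hst
    nlinarith [mul_le_mul_of_nonneg_left h2 hst'0]
  -- farthest(S') ≤ (lmax * st' + lmax) / 2
  have hfar' : farthest G ℓ S' hS' ≤ (lmax * st' + lmax) / 2 := by
    apply Real.sSup_le
    · rintro x ⟨p, rfl⟩
      linarith [key p]
    · positivity
  -- farthest(S) ≥ dnear(p, S) for all p
  have hFSfin : {x | ∃ p : V, x = dnear G ℓ S hS p}.Finite := by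
    apply Set.Finite.subset (Set.finite_range (fun p : V => dnear G ℓ S hS p))
    rintro x ⟨p, rfl⟩
    exact ⟨p, rfl⟩
  have hfarS : ∀ p : V, dnear G ℓ S hS p ≤ farthest G ℓ S hS := by
    intro p
    exact le_csSup hFSfin.bddAbove ⟨p, rfl⟩
  -- main bound
  apply Real.sSup_le
  · rintro x ⟨p, q, hpq, rfl⟩
    have hgpq : lmin ≤ gdist G ℓ p q := gdist_lower hlmin.le hlow hpq hconn
    have hgpq0 : 0 < gdist G ℓ p q := hlmin.trans_le hgpq
    obtain ⟨s, hsmem, hsd⟩ := Finset.exists_mem_eq_inf' hS (fun s => gdist G ℓ p s)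
    have hdvia : dvia G ℓ S hS p q ≤ 2 * dnear G ℓ S hS p + gdist G ℓ p q := by
      calc dvia G ℓ S hS p q ≤ gdist G ℓ p s + gdist G ℓ s q := Finset.inf'_le _ hsmem
        _ ≤ gdist G ℓ p s + (gdist G ℓ s p + gdist G ℓ p q) := by
            linarith [htri s p q]
        _ = 2 * dnear G ℓ S hS p + gdist G ℓ p q := by
            rw [hgsymm s p]; rw [dnear, ← hsd]; ring
    have hA : dnear G ℓ S hS p ≤ lmax * st' + lmax := by
      have := hfarS p
      linarith [hfar']
    have hA0 : 0 ≤ dnear G ℓ S hS p := hdnear0 S hS p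
    rw [div_le_iff₀ hgpq0]
    have hexp : (2 * r * st' + 6 * r + 1) * gdist G ℓ p q
        ≥ (2 * r * st' + 6 * r) * lmin + gdist G ℓ p q := by
      nlinarith [mul_le_mul_of_nonneg_left hgpq (by positivity : (0:ℝ) ≤ 2 * r * st' + 6 * r)]
    nlinarith
  · positivity
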